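/- arXiv:2104.10570 — 9 statements merged into one kernel-verified Lean document; each statement's English description precedes it below -/
import Mathlib

section
/- Let (V, E) be a finite reflexive tournament, let k ≥ 1, and let f be a k-ary polymorphism of (V, E). If there is a vertex z ∈ V such that f maps every constant tuple to z (i.e., f (fun _ => x) = z for every x ∈ V), then f is uniformly equal to z: f x = z for every tuple x : Fin k → V. -/
/-- A `k`-ary polymorphism of a finite reflexive tournament that maps every
constant tuple to `z` is uniformly equal to `z`. -/
theorem stmt0 {V : Type*} [Fintype V] (E : V → V → Prop)
    (hrefl : ∀ v, E v v)
    (htour : ∀ u v : V, u ≠ v → Xor' (E u v) (E v u))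
    (k : ℕ) (hk : 1 ≤ k)
    (f : (Fin k → V) → V)
    (hpoly : ∀ x y : Fin k → V, (∀ i, E (x i) (y i)) → E (f x) (f y))
    (z : V) (hz : ∀ x : V, f (fun _ => x) = z) :
    ∀ x : Fin k → V, f x = z := by
  classical
  suffices H : ∀ n (x : Fin k → V), (Finset.univ.image x).card ≤ n → f x = z by
    intro x; exact H _ x le_rfl
  intro n
  induction n with
  | zero =>
    intro x hx
    have h0 : x ⟨0, hk⟩ ∈ Finset.univ.image x :=
      Finset.mem_image_of_mem x (Finset.mem_univ _)
    have := Finset.card_pos.mpr ⟨_, h0⟩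
    omega
  | succ n ih =>
    intro x hx
    by_cases hconst : ∀ i, x i = x ⟨0, hk⟩
    · have hxe : x = fun _ => x ⟨0, hk⟩ := funext hconst
      rw [hxe]; exact hz _
    push_neg at hconst
    obtain ⟨j, hj⟩ := hconst
    have key : ∀ a b : V, (∃ i, x i = a) → (∃ i, x i = b) → a ≠ b → E a b → f x = z := by
      rintro a b ⟨ia, hia⟩ ⟨ib, hib⟩ hab hE
      have hamem : a ∈ Finset.univ.image x :=
        Finset.mem_image.mpr ⟨ia, Finset.mem_univ _, hia⟩
      have hbmem : b ∈ Finset.univ.image x :=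
        Finset.mem_image.mpr ⟨ib, Finset.mem_univ _, hib⟩
      have hcpos : 0 < (Finset.univ.image x).card := Finset.card_pos.mpr ⟨a, hamem⟩
      set y : Fin k → V := fun i => if x i = a then b else x i with hy
      set y' : Fin k → V := fun i => if x i = b then a else x i with hy'
      have hysub : Finset.univ.image y ⊆ (Finset.univ.image x).erase a := by
        intro v hv
        obtain ⟨i, -, hi⟩ := Finset.mem_image.mp hv
        rw [Finset.mem_erase]
        by_cases h : x i = a
        · simp only [hy, h, if_pos rfl] at hi
          exact ⟨hi ▸ (Ne.symm hab), hi ▸ hbmem⟩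
        · simp only [hy, if_neg h] at hi
          exact ⟨hi ▸ h, hi ▸ Finset.mem_image_of_mem x (Finset.mem_univ i)⟩
      have hy'sub : Finset.univ.image y' ⊆ (Finset.univ.image x).erase b := by
        intro v hv
        obtain ⟨i, -, hi⟩ := Finset.mem_image.mp hv
        rw [Finset.mem_erase]
        by_cases h : x i = b
        · simp only [hy', h, if_pos rfl] at hi
          exact ⟨hi ▸ hab, hi ▸ hamem⟩
        · simp only [hy', if_neg h] at hi
          exact ⟨hi ▸ h, hi ▸ Finset.mem_image_of_mem x (Finset.mem_univ i)⟩
      have hycard : (Finset.univ.image y).card ≤ n := by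
        have := Finset.card_le_card hysub
        rw [Finset.card_erase_of_mem hamem] at this
        omega
      have hy'card : (Finset.univ.image y').card ≤ n := by
        have := Finset.card_le_card hy'sub
        rw [Finset.card_erase_of_mem hbmem] at this
        omega
      have hfy : f y = z := ih y hycard
      have hfy' : f y' = z := ih y' hy'card
      have h1 : E (f x) z := by
        rw [← hfy]
        apply hpoly
        intro i
        by_cases h : x i = a
        · simp only [hy, if_pos h, h]; exact hE
        · simp only [hy, if_neg h]; exact hrefl _
      have h2 : E z (f x) := by
        rw [← hfy']
        apply hpoly
        intro i
        by_cases h : x i = b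
        · simp only [hy', if_pos h, h]; exact hE
        · simp only [hy', if_neg h]; exact hrefl _
      by_contra hne
      rcases htour (f x) z hne with ⟨-, h⟩ | ⟨-, h⟩
      · exact h h2
      · exact h h1
    rcases htour (x j) (x ⟨0, hk⟩) hj with ⟨hE, -⟩ | ⟨hE, -⟩
    · exact key _ _ ⟨j, rfl⟩ ⟨_, rfl⟩ hj hE
    · exact key _ _ ⟨_, rfl⟩ ⟨j, rfl⟩ (Ne.symm hj) hE
end

section
/- A finite reflexive tournament (V, E) is endo-trivial if and only if it is retract-trivial. -/
/-- An endomorphism of the digraph `(V, E)`. -/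
def IsEndo {V : Type*} (E : V → V → Prop) (h : V → V) : Prop :=
  ∀ u v, E u v → E (h u) (h v)

/-- An automorphism of the digraph `(V, E)`: a bijective endomorphism whose inverse is
a homomorphism. -/
def IsAuto {V : Type*} (E : V → V → Prop) (h : V → V) : Prop :=
  IsEndo E h ∧ ∃ g : V → V,
    Function.LeftInverse g h ∧ Function.RightInverse g h ∧ IsEndo E g

/-- A digraph is endo-trivial if every endomorphism is an automorphism or a constant map. -/
def EndoTrivial {V : Type*} (E : V → V → Prop) : Prop :=
  ∀ h : V → V, IsEndo E h → (IsAuto E h ∨ ∃ z : V, ∀ v, h v = z)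

/-- A digraph is retract-trivial if every retraction is the identity or a constant map. -/
def RetractTrivial {V : Type*} (E : V → V → Prop) : Prop :=
  ∀ e : V → V, IsEndo E e → (∀ v, e (e v) = e v) →
    ((∀ v, e v = v) ∨ ∃ z : V, ∀ v, e v = z)

/-- A finite reflexive tournament is endo-trivial iff it is retract-trivial. -/
theorem stmt3 {V : Type*} [Fintype V] (E : V → V → Prop)
    (hrefl : ∀ v, E v v)
    (htour : ∀ u v : V, u ≠ v → Xor' (E u v) (E v u)) :
    EndoTrivial E ↔ RetractTrivial E := by
  constructor
  · -- endo-trivial → retract-trivial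
    intro het e hend hid
    rcases het e hend with ⟨_, g, hgl, _, _⟩ | hconst
    · left
      intro v
      have := congrArg g (hid v)
      rwa [hgl, hgl] at this
    · right; exact hconst
  · -- retract-trivial → endo-trivial
    intro hrt h hend
    cases isEmpty_or_nonempty V with
    | inl hemp =>
      left
      exact ⟨hend, h, fun v => (hemp.false v).elim, fun v => (hemp.false v).elim, hend⟩
    | inr hne =>
      -- the canonical retraction associated to h
      set r : V → V := fun v => Function.invFun h (h v) with hr
      have hrh : ∀ v, h (r v) = h v := fun v => Function.invFun_eq ⟨v, rfl⟩
      have hrend : IsEndo E r := by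
        intro u v huv
        by_cases hq : h u = h v
        · have : r u = r v := by simp [hr, hq]
          rw [this]; exact hrefl _
        · have hru : r u ≠ r v := fun hc => hq (by rw [← hrh u, ← hrh v, hc])
          rcases htour (r u) (r v) hru with ⟨h1, _⟩ | ⟨h1, _⟩
          · exact h1
          · exfalso
            have h2 := hend _ _ h1
            rw [hrh, hrh] at h2
            exact (htour (h u) (h v) hq).elim (fun ⟨_, hn⟩ => hn h2)
              (fun ⟨_, hn⟩ => hn (hend _ _ huv))
      have hridem : ∀ v, r (r v) = r v := by
        intro v; show Function.invFun h (h (r v)) = r v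
        rw [hrh]
      rcases hrt r hrend hridem with hid | ⟨z, hz⟩
      · -- r = id ⟹ h injective ⟹ automorphism
        left
        have hinj : Function.Injective h := by
          intro a b hab
          have : r a = r b := by simp [hr, hab]
          rwa [hid a, hid b] at this
        have hbij : Function.Bijective h := (Finite.injective_iff_bijective).mp hinj
        refine ⟨hend, Function.invFun h, Function.leftInverse_invFun hinj,
          Function.rightInverse_invFun hbij.2, ?_⟩
        intro u v huv
        set a := Function.invFun h u
        set b := Function.invFun h v
        have hha : h a = u := Function.rightInverse_invFun hbij.2 u
        have hhb : h b = v := Function.rightInverse_invFun hbij.2 v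
        by_cases hab : a = b
        · rw [hab]; exact hrefl _
        · rcases htour a b hab with ⟨h1, _⟩ | ⟨h1, _⟩
          · exact h1
          · exfalso
            have h2 := hend _ _ h1
            rw [hha, hhb] at h2
            have huvne : u ≠ v := fun hc => hab (by rw [← hha, ← hhb] at hc; exact hinj hc)
            exact (htour u v huvne).elim (fun ⟨_, hn⟩ => hn h2) (fun ⟨_, hn⟩ => hn huv)
      · -- r constant ⟹ h constant
        right
        refine ⟨h z, fun v => ?_⟩
        rw [← hrh v, hz v]
end

section
/- Let (V, E) be a finite endo-trivial reflexive digraph with at least three vertices. Then every polymorphism of (V, E) is essentially unary: for every k ≥ 1 and every k-ary polymorphism f of (V, E), there exist an index i : Fin k and a map g : V → V such that f x = g (x i) for every x : Fin k → V. -/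
/-- The section of a `k`-ary operation at coordinate `i` through base point `x`. -/
def Sec {V : Type*} {k : ℕ} (f : (Fin k → V) → V) (x : Fin k → V) (i : Fin k) : V → V :=
  fun u => f (Function.update x i u)

lemma auto_inj {V : Type*} {E : V → V → Prop} {h : V → V} (hh : IsAuto E h) :
    Function.Injective h :=
  hh.2.choose_spec.1.injective

lemma auto_surj {V : Type*} {E : V → V → Prop} {h : V → V} (hh : IsAuto E h) :
    Function.Surjective h :=
  hh.2.choose_spec.2.1.surjective

section Aux

variable {V : Type*} [Fintype V] {E : V → V → Prop}

lemma exists_two (hcard : 3 ≤ Fintype.card V) : ∃ y z : V, y ≠ z :=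
  Fintype.exists_pair_of_one_lt_card (by omega)

lemma exists_third (hcard : 3 ≤ Fintype.card V) (p q : V) : ∃ r : V, r ≠ p ∧ r ≠ q := by
  classical
  by_contra hcon
  push_neg at hcon
  have hsub : (Finset.univ : Finset V) ⊆ {p, q} := by
    intro r _
    by_cases hr : r = p
    · simp [hr]
    · simp [hcon r hr]
  have h1 := Finset.card_le_card hsub
  have h2 : ({p, q} : Finset V).card ≤ 2 :=
    le_trans (Finset.card_insert_le _ _) (by simp)
  rw [Finset.card_univ] at h1
  omega

lemma exists_two_ne (hcard : 3 ≤ Fintype.card V) (x₀ : V) :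
    ∃ y z : V, y ≠ z ∧ y ≠ x₀ ∧ z ≠ x₀ := by
  obtain ⟨y, hy, -⟩ := exists_third hcard x₀ x₀
  obtain ⟨z, hz1, hz2⟩ := exists_third hcard y x₀
  exact ⟨y, z, fun h => hz1 h.symm, hy, hz2⟩

/-- An endo-trivial reflexive digraph with ≥ 3 vertices has no universal source. -/
lemma no_source (hrefl : ∀ v, E v v) (hcard : 3 ≤ Fintype.card V)
    (hendo : EndoTrivial E) {s : V} (hs : ∀ x, E s x) : False := by
  classical
  by_cases hin : ∃ w, w ≠ s ∧ E w s
  · obtain ⟨w, hws, hEw⟩ := hin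
    have hEndo : IsEndo E (fun x => if x = s then w else s) := by
      intro u v _
      by_cases hu : u = s <;> by_cases hv : v = s <;>
        simp [hu, hv, hrefl, hEw, hs]
    rcases hendo _ hEndo with ha | ⟨z, hz⟩
    · obtain ⟨y, z', hyz, hys, hzs⟩ := exists_two_ne hcard s
      exact hyz (auto_inj ha (by simp [hys, hzs]))
    · have h1 := hz s
      have h2 := hz w
      simp only [if_pos rfl] at h1
      rw [if_neg hws] at h2
      exact hws (h1.trans h2.symm)
  · push_neg at hin
    obtain ⟨x₀, hx₀, -⟩ := exists_third hcard s s
    have hEndo : IsEndo E (fun x => if x = s then s else x₀) := by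
      intro u v huv
      by_cases hu : u = s <;> by_cases hv : v = s
      · simp [hu, hv, hrefl]
      · simp [hu, hv, hs]
      · exact absurd huv (by rw [hv]; exact hin u hu)
      · simp [hu, hv, hrefl]
    rcases hendo _ hEndo with ha | ⟨z, hz⟩
    · obtain ⟨y, z', hyz, hys, hzs⟩ := exists_two_ne hcard s
      exact hyz (auto_inj ha (by simp [hys, hzs]))
    · have h1 := hz s
      have h2 := hz x₀
      simp only [if_pos rfl] at h1
      rw [if_neg hx₀] at h2
      exact hx₀ (h2.trans h1.symm)

/-- An endo-trivial reflexive digraph with ≥ 3 vertices has no universal sink. -/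
lemma no_sink (hrefl : ∀ v, E v v) (hcard : 3 ≤ Fintype.card V)
    (hendo : EndoTrivial E) {t : V} (ht : ∀ x, E x t) : False := by
  classical
  by_cases hout : ∃ w, w ≠ t ∧ E t w
  · obtain ⟨w, hwt, hEw⟩ := hout
    have hEndo : IsEndo E (fun x => if x = t then w else t) := by
      intro u v _
      by_cases hu : u = t <;> by_cases hv : v = t <;>
        simp [hu, hv, hrefl, hEw, ht]
    rcases hendo _ hEndo with ha | ⟨z, hz⟩
    · obtain ⟨y, z', hyz, hys, hzs⟩ := exists_two_ne hcard t
      exact hyz (auto_inj ha (by simp [hys, hzs]))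
    · have h1 := hz t
      have h2 := hz w
      simp only [if_pos rfl] at h1
      rw [if_neg hwt] at h2
      exact hwt (h1.trans h2.symm)
  · push_neg at hout
    obtain ⟨x₀, hx₀, -⟩ := exists_third hcard t t
    have hEndo : IsEndo E (fun x => if x = t then t else x₀) := by
      intro u v huv
      by_cases hu : u = t <;> by_cases hv : v = t
      · simp [hu, hv, hrefl]
      · exact absurd huv (by rw [hu]; exact hout v hv)
      · simp [hu, hv, ht]
      · simp [hu, hv, hrefl]
    rcases hendo _ hEndo with ha | ⟨z, hz⟩
    · obtain ⟨y, z', hyz, hys, hzs⟩ := exists_two_ne hcard t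
      exact hyz (auto_inj ha (by simp [hys, hzs]))
    · have h1 := hz t
      have h2 := hz x₀
      simp only [if_pos rfl] at h1
      rw [if_neg hx₀] at h2
      exact hx₀ (h2.trans h1.symm)

/-- In an endo-trivial reflexive digraph with ≥ 3 vertices, between any two nonempty
classes of a partition there is a crossing edge. -/
lemma crossing (hrefl : ∀ v, E v v) (hcard : 3 ≤ Fintype.card V)
    (hendo : EndoTrivial E) (P : V → Prop) (h1 : ∃ v, P v) (h2 : ∃ v, ¬ P v) :
    ∃ u u', E u u' ∧ ((P u ∧ ¬ P u') ∨ (¬ P u ∧ P u')) := by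
  classical
  by_contra hno
  push_neg at hno
  obtain ⟨p, hp⟩ := h1
  obtain ⟨q, hq⟩ := h2
  have hEndo : IsEndo E (fun x => if P x then p else q) := by
    intro u v huv
    have h := hno u v huv
    by_cases hu : P u
    · have hv : P v := h.1 hu
      simp [hu, hv, hrefl]
    · have hv : ¬ P v := h.2 hu
      simp [hu, hv, hrefl]
  rcases hendo _ hEndo with ha | ⟨z, hz⟩
  · obtain ⟨r, hr1, hr2⟩ := exists_third hcard p q
    obtain ⟨x, hx⟩ := auto_surj ha r
    simp only at hx
    by_cases hxP : P x
    · rw [if_pos hxP] at hx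
      exact hr1 hx.symm
    · rw [if_neg hxP] at hx
      exact hr2 hx.symm
  · have hzp := hz p
    have hzq := hz q
    rw [if_pos hp] at hzp
    rw [if_neg hq] at hzq
    have hpq : q = p := hzq.trans hzp.symm
    exact hq (hpq ▸ hp)

/-- An endo-trivial reflexive digraph with ≥ 3 vertices has a non-loop edge. -/
lemma no_edges (hrefl : ∀ v, E v v) (hcard : 3 ≤ Fintype.card V)
    (hendo : EndoTrivial E) (h0 : ∀ u v : V, E u v → u = v) : False := by
  classical
  obtain ⟨x, y, hxy⟩ := exists_two hcard
  have hEndo : IsEndo E (fun w => if w = x then x else y) := by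
    intro u v huv
    have := h0 u v huv
    subst this
    exact hrefl _
  rcases hendo _ hEndo with ha | ⟨z, hz⟩
  · obtain ⟨r, hr1, hr2⟩ := exists_third hcard x y
    obtain ⟨w, hw⟩ := auto_surj ha r
    simp only at hw
    by_cases hwx : w = x
    · rw [if_pos hwx] at hw
      exact hr1 hw.symm
    · rw [if_neg hwx] at hw
      exact hr2 hw.symm
  · have h1 := hz x
    have h2 := hz y
    rw [if_pos rfl] at h1
    rw [if_neg (Ne.symm hxy)] at h2
    exact hxy (h1.trans h2.symm)

/-- An endo-trivial reflexive digraph with ≥ 3 vertices: the edge relation cannot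
be symmetric and transitive (i.e. an equivalence relation). -/
lemma eqrel (hrefl : ∀ v, E v v) (hcard : 3 ≤ Fintype.card V)
    (hendo : EndoTrivial E) (hsym : ∀ u v, E u v → E v u)
    (htr : ∀ u v w, E u v → E v w → E u w) : False := by
  classical
  by_cases hne : ∃ u v, E u v ∧ u ≠ v
  · obtain ⟨u, v, huv, hneq⟩ := hne
    have hEndo : IsEndo E (fun x => if E u x then v else x) := by
      intro x y hxy
      by_cases hux : E u x
      · have huy : E u y := htr u x y hux hxy
        simp [hux, huy, hrefl]
      · have huy : ¬ E u y := fun huy => hux (htr u y x huy (hsym x y hxy))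
        simp [hux, huy, hxy]
    rcases hendo _ hEndo with ha | ⟨z, hz⟩
    · have h1 : (fun x => if E u x then v else x) u = v := by simp [hrefl u]
      have h2 : (fun x => if E u x then v else x) v = v := by simp [huv]
      exact hneq (auto_inj ha (h1.trans h2.symm))
    · have hzv := hz v
      rw [if_pos huv] at hzv
      -- z = v, and every x with ¬ E u x satisfies x = z = v ∈ class of u, contradiction
      have hall : ∀ x, E u x := by
        intro x
        by_contra hux
        have := hz x
        rw [if_neg hux] at this
        rw [this, ← hzv] at hux
        exact hux huv
      exact no_source hrefl hcard hendo hall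
  · push_neg at hne
    exact no_edges hrefl hcard hendo (fun u v huv => hne u v huv)

/-- Preimage pairs under a pair of injective maps compatible with `E` (finiteness). -/
lemma pair_preimage (φ ψ : V → V) (hφ : Function.Injective φ) (hψ : Function.Injective ψ)
    (hmap : ∀ p q, E p q → E (φ p) (ψ q)) {x y : V} (hxy : E x y) :
    ∃ p q, E p q ∧ φ p = x ∧ ψ q = y := by
  classical
  let S := {z : V × V // E z.1 z.2}
  let Φ : S → S := fun z => ⟨(φ z.1.1, ψ z.1.2), hmap _ _ z.2⟩
  have hinj : Function.Injective Φ := by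
    rintro ⟨⟨a1, a2⟩, ha⟩ ⟨⟨b1, b2⟩, hb⟩ hab
    have h := congrArg Subtype.val hab
    rw [Prod.ext_iff] at h
    apply Subtype.ext
    rw [Prod.ext_iff]
    exact ⟨hφ h.1, hψ h.2⟩
  have hsurj : Function.Surjective Φ := Finite.injective_iff_surjective.mp hinj
  obtain ⟨⟨⟨p, q⟩, hpq⟩, heq⟩ := hsurj ⟨(x, y), hxy⟩
  have h := congrArg Subtype.val heq
  rw [Prod.ext_iff] at h
  exact ⟨p, q, hpq, h.1, h.2⟩

/-- A binary polymorphism cannot have both an automorphism row and a non-automorphism row. -/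
lemma rowmix (hrefl : ∀ v, E v v) (hcard : 3 ≤ Fintype.card V) (hendo : EndoTrivial E)
    (G : V → V → V)
    (hG : ∀ u u' w w', E u u' → E w w' → E (G u w) (G u' w'))
    (h1 : ∃ v, IsAuto E (fun w => G v w)) (h2 : ∃ v, ¬ IsAuto E (fun w => G v w)) : False := by
  classical
  have hrow : ∀ v, IsEndo E (fun w => G v w) := by
    intro v w w' h
    exact hG v v w w' (hrefl v) h
  obtain ⟨u, u', hedge, hcross⟩ := crossing hrefl hcard hendo
    (fun v => IsAuto E (fun w => G v w)) h1 h2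
  rcases hcross with ⟨hu, hu'⟩ | ⟨hu, hu'⟩
  · -- row u auto, row u' not auto hence constant ζ : universal sink
    rcases hendo _ (hrow u') with h | ⟨ζ, hζ⟩
    · exact hu' h
    have hsink : ∀ x, E x ζ := by
      intro x
      obtain ⟨w, hw⟩ := auto_surj hu x
      have hE := hG u u' w w hedge (hrefl w)
      simp only at hw
      rw [hw, hζ w] at hE
      exact hE
    exact no_sink hrefl hcard hendo hsink
  · -- row u constant ζ, row u' auto : universal source
    rcases hendo _ (hrow u) with h | ⟨ζ, hζ⟩
    · exact hu h
    have hsource : ∀ x, E ζ x := by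
      intro x
      obtain ⟨w, hw⟩ := auto_surj hu' x
      have hE := hG u u' w w hedge (hrefl w)
      simp only at hw
      rw [hw, hζ w] at hE
      exact hE
    exact no_source hrefl hcard hendo hsource

/-- Core lemma: a binary polymorphism of an endo-trivial reflexive digraph with ≥ 3 vertices
cannot have both an automorphism row and an automorphism column. -/
lemma star (hrefl : ∀ v, E v v) (hcard : 3 ≤ Fintype.card V) (hendo : EndoTrivial E)
    (G : V → V → V)
    (hG : ∀ u u' w w', E u u' → E w w' → E (G u w) (G u' w'))
    (a b : V) (hrowa : IsAuto E (fun w => G a w)) (hcolb : IsAuto E (fun v => G v b)) :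
    False := by
  classical
  have hallrow : ∀ v, IsAuto E (fun w => G v w) := by
    by_contra hx
    push_neg at hx
    exact rowmix hrefl hcard hendo G hG ⟨a, hrowa⟩ hx
  have hallcol : ∀ w, IsAuto E (fun v => G v w) := by
    by_contra hx
    push_neg at hx
    exact rowmix hrefl hcard hendo (fun u w => G w u)
      (fun u u' w w' h h' => hG w w' u u' h' h) ⟨b, hcolb⟩ hx
  -- Mal'cev style chase: E is symmetric and transitive.
  have hsym : ∀ u v, E u v → E v u := by
    intro u v huv
    obtain ⟨e₁, e₂, he, h1u, h1v⟩ := pair_preimage (fun p => G u p) (fun q => G v q)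
      (auto_inj (hallrow u)) (auto_inj (hallrow v))
      (fun p q h => hG u v p q huv h) huv
    obtain ⟨q₁, q₂, hq, h2a, h2b⟩ := pair_preimage (fun p => G p e₁) (fun p => G p e₂)
      (auto_inj (hallcol e₁)) (auto_inj (hallcol e₂))
      (fun p q h => hG p q e₁ e₂ h he) (hrefl u)
    have hq₁ : q₁ = u := auto_inj (hallcol e₁) (show G q₁ e₁ = G u e₁ by rw [h2a, h1u])
    obtain ⟨k₁, k₂, hk, h3a, h3b⟩ := pair_preimage (fun p => G u p) (fun q => G v q)
      (auto_inj (hallrow u)) (auto_inj (hallrow v))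
      (fun p q h => hG u v p q huv h) (hrefl v)
    have hk₂ : k₂ = e₂ := auto_inj (hallrow v) (show G v k₂ = G v e₂ by rw [h3b, h1v])
    have final := hG q₁ q₂ k₁ k₂ hq hk
    rw [hq₁, hk₂] at final
    rw [h3a, h2b] at final
    exact final
  have htr : ∀ u v w, E u v → E v w → E u w := by
    intro u v w huv hvw
    obtain ⟨e, e', hee, h1, h1'⟩ := pair_preimage (fun p => G v p) (fun p => G v p)
      (auto_inj (hallrow v)) (auto_inj (hallrow v))
      (fun p q h => hG v v p q (hrefl v) h) (hrefl v)
    have hee' : e' = e := auto_inj (hallrow v) (show G v e' = G v e by rw [h1', h1])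
    rw [hee'] at hee
    obtain ⟨q, q', hq, h2, h2'⟩ := pair_preimage (fun p => G p e) (fun p => G p e)
      (auto_inj (hallcol e)) (auto_inj (hallcol e))
      (fun p r h => hG p r e e h hee) huv
    have hq' : q' = v := auto_inj (hallcol e) (show G q' e = G v e by rw [h2', h1])
    obtain ⟨e'', m, hem, h3, h3'⟩ := pair_preimage (fun p => G v p) (fun p => G v p)
      (auto_inj (hallrow v)) (auto_inj (hallrow v))
      (fun p q h => hG v v p q (hrefl v) h) hvw
    have he'' : e'' = e := auto_inj (hallrow v) (show G v e'' = G v e by rw [h3, h1])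
    have final := hG q q' e'' m hq hem
    rw [hq', he''] at final
    rw [h2, h3'] at final
    exact final
  exact eqrel hrefl hcard hendo hsym htr

end Aux

/-- Walk from `a` to an arbitrary tuple by single-coordinate updates. -/
lemma reach {α : Type*} {k : ℕ} (a : Fin k → α) (T : (Fin k → α) → Prop) (h0 : T a)
    (hstep : ∀ (b : Fin k → α) (j : Fin k) (v : α), T b → T (Function.update b j v)) :
    ∀ b, T b := by
  classical
  have key : ∀ (n : ℕ) (b : Fin k → α), (∀ j : Fin k, n ≤ (j : ℕ) → b j = a j) → T b := by
    intro n
    induction n with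
    | zero =>
      intro b hb
      have : b = a := funext fun j => hb j (Nat.zero_le _)
      rwa [this]
    | succ n ih =>
      intro b hb
      by_cases hn : n < k
      · have hb' : ∀ j : Fin k, n ≤ (j : ℕ) →
            (Function.update b ⟨n, hn⟩ (a ⟨n, hn⟩)) j = a j := by
          intro j hj
          by_cases hj' : j = ⟨n, hn⟩
          · subst hj'
            simp
          · rw [Function.update_of_ne hj']
            refine hb j ?_
            have : (j : ℕ) ≠ n := fun h => hj' (Fin.ext h)
            omega
        have hT' := ih _ hb'
        have hbeq : b =
            Function.update (Function.update b ⟨n, hn⟩ (a ⟨n, hn⟩)) ⟨n, hn⟩ (b ⟨n, hn⟩) := by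
          rw [Function.update_idem, Function.update_eq_self]
        rw [hbeq]
        exact hstep _ _ _ hT'
      · exact ih b (fun j hj => absurd hj (by have := j.isLt; omega))
  intro b
  exact key k b (fun j hj => absurd hj (not_le.mpr j.isLt))

/-- Every polymorphism of a finite endo-trivial reflexive digraph with at least
three vertices is essentially unary. -/
theorem stmt4 {V : Type*} [Fintype V] (E : V → V → Prop)
    (hrefl : ∀ v, E v v)
    (hcard : 3 ≤ Fintype.card V)
    (hendo : EndoTrivial E)
    (k : ℕ) (hk : 1 ≤ k)
    (f : (Fin k → V) → V)
    (hpoly : ∀ x y : Fin k → V, (∀ i, E (x i) (y i)) → E (f x) (f y)) :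
    ∃ (i : Fin k) (g : V → V), ∀ x : Fin k → V, f x = g (x i) := by
  classical
  have hV : Nonempty V := Fintype.card_pos_iff.mp (by omega)
  obtain ⟨a0⟩ := hV
  have hSendo : ∀ (x : Fin k → V) (i : Fin k), IsEndo E (Sec f x i) := by
    intro x i u v huv
    apply hpoly
    intro l
    by_cases hl : l = i
    · subst hl
      simp only [Function.update_self]
      exact huv
    · simp only [Function.update_of_ne hl]
      exact hrefl _
  by_cases hex : ∃ (x : Fin k → V) (i : Fin k), IsAuto E (Sec f x i)
  · obtain ⟨a, i, hauto⟩ := hex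
    have main : ∀ b, ∀ u, Sec f b i u = Sec f a i u := by
      refine reach a (fun b => ∀ u, Sec f b i u = Sec f a i u) (fun u => rfl) ?_
      intro b j v hT
      by_cases hji : j = i
      · subst hji
        intro u
        show f (Function.update (Function.update b j v) j u) = _
        rw [Function.update_idem]
        exact hT u
      · have hSb : IsAuto E (Sec f b i) := by
          have heq : Sec f b i = Sec f a i := funext hT
          rw [heq]
          exact hauto
        set G : V → V → V := fun u w => f (Function.update (Function.update b i u) j w)
          with hGdef
        have hGpoly : ∀ u u' w w', E u u' → E w w' → E (G u w) (G u' w') := by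
          intro u u' w w' hu hw
          apply hpoly
          intro l
          by_cases hlj : l = j
          · subst hlj
            simp only [Function.update_self]
            exact hw
          · simp only [Function.update_of_ne hlj]
            by_cases hli : l = i
            · subst hli
              simp only [Function.update_self]
              exact hu
            · simp only [Function.update_of_ne hli]
              exact hrefl _
        have hcolfun : (fun u => G u (b j)) = Sec f b i := by
          funext u
          show f (Function.update (Function.update b i u) j (b j)) = f (Function.update b i u)
          have h' : Function.update b i u j = b j := Function.update_of_ne hji _ _
          rw [← h', Function.update_eq_self]
        have hcol : IsAuto E (fun u => G u (b j)) := by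
          rw [hcolfun]
          exact hSb
        intro u
        have hrowendo : IsEndo E (fun w => G u w) := by
          intro w w' hww'
          exact hGpoly u u w w' (hrefl u) hww'
        rcases hendo _ hrowendo with hrowauto | ⟨z, hz⟩
        · exact (star hrefl hcard hendo G hGpoly u (b j) hrowauto hcol).elim
        · have e1 : Sec f (Function.update b j v) i u = G u v := by
            show f (Function.update (Function.update b j v) i u)
              = f (Function.update (Function.update b i u) j v)
            rw [Function.update_comm hji]
          have e2 : G u (b j) = Sec f b i u := congrFun hcolfun u
          calc Sec f (Function.update b j v) i u = G u v := e1
            _ = z := hz v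
            _ = G u (b j) := (hz (b j)).symm
            _ = Sec f b i u := e2
            _ = Sec f a i u := hT u
    refine ⟨i, fun u => f (Function.update a i u), fun x => ?_⟩
    have h1 : f x = Sec f x i (x i) := by
      show f x = f (Function.update x i (x i))
      rw [Function.update_eq_self]
    rw [h1, main x (x i)]
    rfl
  · push_neg at hex
    have hconst : ∀ (x : Fin k → V) (j : Fin k) (v : V),
        f (Function.update x j v) = f x := by
      intro x j v
      rcases hendo _ (hSendo x j) with h | ⟨z, hz⟩
      · exact absurd h (hex x j)
      · have h1 : f (Function.update x j v) = z := hz v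
        have h2 : f (Function.update x j (x j)) = z := hz (x j)
        rw [Function.update_eq_self] at h2
        rw [h1, ← h2]
    have hall : ∀ x, f x = f (fun _ => a0) := by
      refine reach (fun _ => a0) (fun x => f x = f (fun _ => a0)) rfl ?_
      intro b j v hT
      rw [hconst b j v]
      exact hT
    exact ⟨⟨0, hk⟩, fun _ => f (fun _ => a0), fun x => hall x⟩
end

section
/- Let (V, E) be a finite endo-trivial reflexive tournament with at least three vertices, and set n = Fintype.card V. Then (V, E) contains a directed Hamilton cycle: there is a bijection σ : ZMod n ≃ V such that E (σ i) (σ (i + 1)) holds for every i : ZMod n. -/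
/-!
Collapsing a homogeneous set (one that every outside vertex treats uniformly) onto one of its
points is an endomorphism of a reflexive digraph; if the set has two points and a nonempty
complement, it is neither injective nor constant. If no edge of a tournament left a set `S`, then
`S` and its complement would both be homogeneous, and with three vertices one of them has two
points. So an endo-trivial reflexive tournament is strongly connected, and Camion's theorem gives
the Hamilton cycle: a cycle missing a vertex grows, either by inserting an outside vertex with
both an in- and an out-neighbour on it, or, when every outside vertex dominates or is dominated
by the whole cycle, by a detour `⋯ → w → x → a` along an edge from a dominated vertex `w` to a
dominating vertex `x`, which strong connectivity provides.
-/

section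

variable {V : Type*} {E : V → V → Prop}

def IsTournament (E : V → V → Prop) : Prop :=
  ∀ u v : V, u ≠ v → Xor (E u v) (E v u)

lemma IsTournament.of_not (hE : IsTournament E) {u v : V} (huv : u ≠ v) (h : ¬E u v) :
    E v u :=
  (Xor.or (hE u v huv)).resolve_left h

lemma IsTournament.not_of (hE : IsTournament E) {u v : V} (huv : u ≠ v) (h : E u v) :
    ¬E v u :=
  xor_iff_iff_not.1 (hE u v huv) |>.1 h

def IsHomogeneousSet (E : V → V → Prop) (A : Set V) : Prop :=
  ∀ u ∈ A, ∀ w ∈ A, ∀ x ∉ A, (E u x → E w x) ∧ (E x u → E x w)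

lemma IsHomogeneousSet.isEndo_collapse {A : Set V} [DecidablePred (· ∈ A)]
    (hA : IsHomogeneousSet E A) (hrefl : ∀ v, E v v) {a : V} (ha : a ∈ A) :
    IsEndo E (fun x => if x ∈ A then a else x) := by
  intro u v huv
  by_cases hu : u ∈ A <;> by_cases hv : v ∈ A <;> simp only [hu, hv, if_true, if_false]
  · exact hrefl a
  · exact (hA u hu a ha v hv).1 huv
  · exact (hA v hv a ha u hu).2 huv
  · exact huv

lemma EndoTrivial.subsingleton_of_isHomogeneousSet (hendo : EndoTrivial E)
    (hrefl : ∀ v, E v v) {A : Set V} (hA : IsHomogeneousSet E A) (hAc : Aᶜ.Nonempty) :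
    A.Subsingleton := by
  classical
  intro u hu w hw
  obtain ⟨x, hx : x ∉ A⟩ := hAc
  rcases hendo _ (hA.isEndo_collapse hrefl hu) with ⟨-, g, hg, -⟩ | ⟨z, hz⟩
  · exact hg.injective (by simp [hu, hw])
  · have hxu : x = u := by simpa [hx, hu] using (hz x).trans (hz u).symm
    exact absurd (hxu ▸ hu) hx

lemma IsTournament.isHomogeneousSet_of_forall_not (hE : IsTournament E) {S : Set V}
    (hS : ∀ u ∈ S, ∀ w ∉ S, ¬E u w) : IsHomogeneousSet E S ∧ IsHomogeneousSet E Sᶜ := by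
  have hin {u w : V} (hu : u ∈ S) (hw : w ∉ S) : E w u :=
    hE.of_not (fun h => hw (h ▸ hu)) (hS u hu w hw)
  exact ⟨fun u hu w hw x hx => ⟨fun h => absurd h (hS u hu x hx), fun _ => hin hw hx⟩,
    fun u hu w hw x hx => ⟨fun _ => hin (not_not.1 hx) hw,
      fun h => absurd h (hS x (not_not.1 hx) u hu)⟩⟩

/-- Strong connectivity phrased through cuts, which for finite digraphs is equivalent to the
existence of directed paths between any two vertices. -/
def IsStronglyConnected (E : V → V → Prop) : Prop :=
  ∀ S : Set V, S.Nonempty → Sᶜ.Nonempty → ∃ u ∈ S, ∃ w ∉ S, E u w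

lemma EndoTrivial.isStronglyConnected [Fintype V] (hendo : EndoTrivial E)
    (hrefl : ∀ v, E v v) (hE : IsTournament E) (hcard : 3 ≤ Fintype.card V) :
    IsStronglyConnected E := by
  intro S hS hSc
  by_contra! hcut
  obtain ⟨hSmod, hScmod⟩ := hE.isHomogeneousSet_of_forall_not hcut
  have h1 : S.ncard ≤ 1 := Set.ncard_le_one_iff_subsingleton.2
    (hendo.subsingleton_of_isHomogeneousSet hrefl hSmod hSc)
  have h2 : Sᶜ.ncard ≤ 1 := Set.ncard_le_one_iff_subsingleton.2
    (hendo.subsingleton_of_isHomogeneousSet hrefl hScmod (by rwa [compl_compl]))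
  have := S.ncard_add_ncard_compl
  rw [Nat.card_eq_fintype_card] at this
  omega

def IsClosedChain (E : V → V → Prop) (a : V) (t : List V) : Prop :=
  (a :: t ++ [a]).IsChain E

lemma IsClosedChain.rotate {a p : V} {m l : List V} (hc : IsClosedChain E a (m ++ p :: l)) :
    IsClosedChain E p (l ++ a :: m) := by
  have h : (a :: m ++ p :: (l ++ [a])).IsChain E := by simpa [IsClosedChain] using hc
  rw [List.isChain_split] at h
  have h' : (p :: l ++ a :: (m ++ [p])).IsChain E :=
    List.isChain_split.2 ⟨by simpa using h.2, by simpa using h.1⟩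
  simpa [IsClosedChain] using h'

lemma IsClosedChain.exists_rotate {a p : V} {t : List V} (hc : IsClosedChain E a t)
    (hp : p ∈ a :: t) : ∃ t', IsClosedChain E p t' ∧ (p :: t').Perm (a :: t) := by
  rcases List.mem_cons.1 hp with rfl | hp
  · exact ⟨t, hc, .refl _⟩
  · obtain ⟨m, l, rfl⟩ := List.append_of_mem hp
    refine ⟨l ++ a :: m, hc.rotate, ?_⟩
    exact List.perm_append_comm (l₁ := p :: l) (l₂ := a :: m)

/-- `v` is inserted just before the first out-neighbour that follows an in-neighbour. -/
lemma IsTournament.exists_perm_insert_isChain (hE : IsTournament E) {v y : V} :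
    ∀ {x : V} {l : List V}, v ∉ l → (x :: l ++ [y]).IsChain E → (∃ b ∈ x :: l, E b v) →
      E v y → ∃ l', l'.Perm (v :: l) ∧ (x :: l' ++ [y]).IsChain E
  | x, [], _, hc, hxv, hvy => by
    obtain ⟨b, hb, hbv⟩ := hxv
    rw [List.mem_singleton] at hb
    subst hb
    exact ⟨[v], .refl _, by simp [hbv, hvy]⟩
  | x, b :: l, hv, hc, hxv, hvy => by
    simp only [List.cons_append, List.isChain_cons_cons] at hc
    by_cases hbv : ∃ c ∈ b :: l, E c v
    · obtain ⟨l', hperm, hc'⟩ :=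
        hE.exists_perm_insert_isChain (List.not_mem_of_not_mem_cons hv) hc.2 hbv hvy
      exact ⟨b :: l', (hperm.cons b).trans (.swap v b l), by simpa [hc.1] using hc'⟩
    · push Not at hbv
      obtain ⟨c, hcmem, hcv⟩ := hxv
      have hxv : E x v := by
        rcases List.mem_cons.1 hcmem with rfl | hcmem
        · exact hcv
        · exact absurd hcv (hbv c hcmem)
      have hvb : E v b :=
        hE.of_not (ne_of_mem_of_not_mem List.mem_cons_self hv) (hbv b List.mem_cons_self)
      exact ⟨v :: b :: l, .refl _, by simpa [hxv, hvb] using hc.2⟩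

lemma IsClosedChain.exists_perm_insert (hE : IsTournament E) {a v : V} {t : List V}
    (hc : IsClosedChain E a t) (hv : v ∉ a :: t) (hp : ∃ p ∈ a :: t, E p v)
    (hq : ∃ q ∈ a :: t, E v q) :
    ∃ a' t', IsClosedChain E a' t' ∧ (a' :: t').Perm (v :: a :: t) := by
  obtain ⟨q, hq, hvq⟩ := hq
  obtain ⟨t', hc', hperm⟩ := hc.exists_rotate hq
  have hv' : v ∉ t' := fun h => hv (hperm.subset (List.mem_cons_of_mem q h))
  obtain ⟨p, hp, hpv⟩ := hp
  obtain ⟨l, hl, hcl⟩ :=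
    hE.exists_perm_insert_isChain hv' hc' ⟨p, hperm.symm.subset hp, hpv⟩ hvq
  exact ⟨q, l, hcl, (hl.cons q).trans ((List.Perm.swap v q t').trans (hperm.cons v))⟩

lemma IsClosedChain.append_pair {a w x : V} {t : List V} (hc : IsClosedChain E a t)
    (hw : ∀ p ∈ a :: t, E p w) (hwx : E w x) (hxa : E x a) :
    IsClosedChain E a (t ++ [w, x]) := by
  have h : (a :: t ++ [w, x, a]).IsChain E := by
    refine hc.left_of_append.append (by simp [hwx, hxa]) fun p hp y hy => ?_
    obtain rfl : y = w := by simpa using hy.symm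
    exact hw p (List.mem_of_getLast? hp)
  simpa [IsClosedChain] using h

lemma IsClosedChain.exists_longer (hE : IsTournament E) (hs : IsStronglyConnected E)
    {a v : V} {t : List V} (hc : IsClosedChain E a t) (hnd : (a :: t).Nodup)
    (hv : v ∉ a :: t) :
    ∃ a' t', IsClosedChain E a' t' ∧ (a' :: t').Nodup ∧ t.length < t'.length := by
  by_cases hmix : ∃ v ∉ a :: t, (∃ p ∈ a :: t, E p v) ∧ ∃ q ∈ a :: t, E v q
  · obtain ⟨u, hu, hp, hq⟩ := hmix
    obtain ⟨a', t', hc', hperm⟩ := hc.exists_perm_insert hE hu hp hq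
    refine ⟨a', t', hc', hperm.nodup_iff.2 (List.nodup_cons.2 ⟨hu, hnd⟩), ?_⟩
    have := hperm.length_eq
    simp only [List.length_cons] at this
    omega
  push Not at hmix
  have hdom : ∀ w ∉ a :: t, ∀ p ∈ a :: t, E p w → ∀ q ∈ a :: t, E q w :=
    fun w hw p hp hpw q hq =>
      hE.of_not (ne_of_mem_of_not_mem hq hw).symm (hmix w hw ⟨p, hp, hpw⟩ q hq)
  obtain ⟨u, hu, w, hw, huw⟩ := hs {x | x ∈ a :: t} ⟨a, List.mem_cons_self⟩ ⟨v, hv⟩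
  obtain ⟨w, ⟨hwC, hwdom⟩, x, hxO, hwx⟩ :=
    hs {w | w ∉ a :: t ∧ ∀ p ∈ a :: t, E p w} ⟨w, hw, hdom w hw u hu huw⟩
      ⟨a, fun h => h.1 List.mem_cons_self⟩
  have hxC : x ∉ a :: t := fun hx => hE.not_of (ne_of_mem_of_not_mem hx hwC) (hwdom x hx) hwx
  have hxdom : ∀ q ∈ a :: t, E x q := fun q hq =>
    hE.of_not (ne_of_mem_of_not_mem hq hxC) fun hqx => hxO ⟨hxC, hdom x hxC q hq hqx⟩
  have hwx' : w ≠ x := fun h =>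
    hE.not_of (ne_of_mem_of_not_mem List.mem_cons_self hwC) (hwdom a List.mem_cons_self)
      (h ▸ hxdom a List.mem_cons_self)
  refine ⟨a, t ++ [w, x], hc.append_pair hwdom hwx (hxdom a List.mem_cons_self), ?_, by simp⟩
  have : (w :: x :: a :: t).Nodup :=
    List.nodup_cons.2
      ⟨List.not_mem_cons_of_ne_of_not_mem hwx' hwC, List.nodup_cons.2 ⟨hxC, hnd⟩⟩
  exact (List.perm_append_comm (l₁ := a :: t) (l₂ := [w, x])).nodup_iff.2 this

lemma exists_isClosedChain_nodup_forall_mem [Fintype V] [Nonempty V] (hrefl : ∀ v, E v v)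
    (hE : IsTournament E) (hs : IsStronglyConnected E) :
    ∃ a t, IsClosedChain E a t ∧ (a :: t).Nodup ∧ ∀ v, v ∈ a :: t := by
  have hgrow (k : ℕ) : ∃ a t, IsClosedChain E a t ∧ (a :: t).Nodup ∧
      ((∀ v, v ∈ a :: t) ∨ k ≤ t.length) := by
    induction k with
    | zero =>
      obtain ⟨v⟩ := ‹Nonempty V›
      exact ⟨v, [], by simp [IsClosedChain, hrefl], by simp, .inr le_rfl⟩
    | succ k ih =>
      obtain ⟨a, t, hc, hnd, hall | hk⟩ := ih
      · exact ⟨a, t, hc, hnd, .inl hall⟩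
      by_cases hall : ∀ v, v ∈ a :: t
      · exact ⟨a, t, hc, hnd, .inl hall⟩
      push Not at hall
      obtain ⟨v, hv⟩ := hall
      obtain ⟨a', t', hc', hnd', hlt⟩ := hc.exists_longer hE hs hnd hv
      exact ⟨a', t', hc', hnd', .inr (by omega)⟩
  obtain ⟨a, t, hc, hnd, hall | hk⟩ := hgrow (Fintype.card V)
  · exact ⟨a, t, hc, hnd, hall⟩
  · have := hnd.length_le_card
    simp only [List.length_cons] at this
    omega

lemma IsClosedChain.exists_equiv_zmod [Fintype V] {a : V} {t : List V}
    (hc : IsClosedChain E a t) (hnd : (a :: t).Nodup) (hall : ∀ v, v ∈ a :: t) :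
    ∃ σ : ZMod (Fintype.card V) ≃ V, ∀ i, E (σ i) (σ (i + 1)) := by
  classical
  let σ : Fin (t.length + 1) ≃ V := hnd.getEquivOfForallMemList _ hall
  have hcard : t.length + 1 = Fintype.card V := by simpa using Fintype.card_congr σ
  have hσ (i : Fin (t.length + 1)) : E (σ i) (σ (i + 1)) := by
    have h := hc.getElem i (by simp; omega)
    change E (a :: t)[(i : ℕ)] (a :: t)[((i + 1 : Fin _) : ℕ)]
    simp only [Fin.val_add_one]
    rw [List.getElem_append_left i.2] at h
    split_ifs with hi
    · subst hi
      simpa using h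
    · have := Fin.val_lt_last hi
      rwa [List.getElem_append_left (by simpa using this)] at h
  rw [← hcard]
  exact ⟨σ, hσ⟩

end

/-- A finite endo-trivial reflexive tournament with at least three vertices
contains a directed Hamilton cycle. -/
theorem stmt5 {V : Type*} [Fintype V] (E : V → V → Prop)
    (hrefl : ∀ v, E v v)
    (htour : ∀ u v : V, u ≠ v → Xor' (E u v) (E v u))
    (hcard : 3 ≤ Fintype.card V)
    (hendo : EndoTrivial E) :
    ∃ σ : ZMod (Fintype.card V) ≃ V, ∀ i : ZMod (Fintype.card V), E (σ i) (σ (i + 1)) := by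
  have hE : IsTournament E := htour
  have : Nonempty V := Fintype.card_pos_iff.1 (by omega)
  obtain ⟨a, t, hc, hnd, hall⟩ :=
    exists_isClosedChain_nodup_forall_mem hrefl hE (hendo.isStronglyConnected hrefl hE hcard)
  exact hc.exists_equiv_zmod hnd hall
end

section
/- Let (V, E) be a finite endo-trivial reflexive tournament and let (W, F) be a finite digraph that is a homomorphic image of (V, E). If 1 < Fintype.card W < Fintype.card V, then (W, F) has a double edge: there exist distinct vertices w, w' : W with F w w' and F w' w. -/
/-- Every homomorphic image of a finite endo-trivial reflexive tournament of
cardinality strictly between `1` and `|V|` has a double edge. -/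
theorem stmt6 {V W : Type*} [Fintype V] [Fintype W]
    (E : V → V → Prop) (F : W → W → Prop)
    (hrefl : ∀ v, E v v)
    (htour : ∀ u v : V, u ≠ v → Xor' (E u v) (E v u))
    (hendo : EndoTrivial E)
    (h : V → W)
    (hhom : ∀ u v, E u v → F (h u) (h v))
    (hsurj : Function.Surjective h)
    (hesurj : ∀ w w' : W, F w w' → ∃ u v : V, E u v ∧ h u = w ∧ h v = w')
    (hcard1 : 1 < Fintype.card W) (hcard2 : Fintype.card W < Fintype.card V) :
    ∃ w w' : W, w ≠ w' ∧ F w w' ∧ F w' w := by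
  by_contra hno
  push_neg at hno
  obtain ⟨s, hs⟩ := hsurj.hasRightInverse
  set g : V → V := fun v => s (h v) with hg
  have hgendo : IsEndo E g := by
    intro u v huv
    by_cases heq : h u = h v
    · simp only [hg, heq]
      exact hrefl _
    · have hne : s (h u) ≠ s (h v) := fun hc => heq (by rw [← hs (h u), ← hs (h v), hc])
      rcases (htour _ _ hne).imp (fun x => x.1) (fun x => x.1) with hE | hE
      · exact hE
      · exfalso
        have hF1 : F (h u) (h v) := hhom _ _ huv
        have hF2 : F (h v) (h u) := by
          have := hhom _ _ hE
          rwa [hs, hs] at this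
        exact hno _ _ heq hF1 hF2
  have hni : ¬ Function.Injective h := by
    intro hinj
    exact absurd (Fintype.card_le_of_injective h hinj) (not_le.mpr hcard2)
  rcases hendo g hgendo with ⟨_, inv, hl, _, _⟩ | ⟨z, hz⟩
  · -- g injective, but h isn't
    rw [Function.not_injective_iff] at hni
    obtain ⟨a, b, hab, hne⟩ := hni
    have : g a = g b := by simp [hg, hab]
    exact hne (by rw [← hl a, ← hl b, this])
  · -- h constant, contradicting 1 < card W
    have hconst : ∀ v, h v = h z := by
      intro v
      have := congrArg h (hz v)
      rwa [hg, hs] at this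
    obtain ⟨w1, w2, hw⟩ := Fintype.exists_pair_of_one_lt_card hcard1
    obtain ⟨a, rfl⟩ := hsurj w1
    obtain ⟨b, rfl⟩ := hsurj w2
    exact hw (by rw [hconst a, hconst b])
end

section
/- Let m ≥ 1, let (V, E) be a finite reflexive tournament, and let h be a homomorphism from Cyl*_m to (V, E). If h is constant on the bottom copy, i.e., there is z ∈ V with h (i, 0) = z for every i : ZMod m, then h is constant on all of Cyl*_m: h w = z for every vertex w of Cyl*_m. -/
/-- The edge relation of the gadget `Cyl*_m`, on vertex set `ZMod m × Fin m`:
loops, cycle edges, red edges and green edges. -/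
def CylE (m : ℕ) : ZMod m × Fin m → ZMod m × Fin m → Prop := fun a b =>
  a = b ∨
  (b.1 = a.1 + 1 ∧ b.2 = a.2) ∨
  (a.1 = b.1 ∧ (a.2 : ℕ) + 1 = (b.2 : ℕ)) ∨
  (b.1 = a.1 + 1 ∧ (b.2 : ℕ) + 1 = (a.2 : ℕ))

/-- A homomorphism from `Cyl*_m` to a finite reflexive tournament that is
constant on the bottom copy is constant everywhere. -/
theorem stmt7 (m : ℕ) (hm : 1 ≤ m)
    {V : Type*} [Fintype V] (E : V → V → Prop)
    (hrefl : ∀ v, E v v)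
    (htour : ∀ u v : V, u ≠ v → Xor' (E u v) (E v u))
    (h : ZMod m × Fin m → V)
    (hhom : ∀ a b, CylE m a b → E (h a) (h b))
    (z : V) (hz : ∀ i : ZMod m, h (i, ⟨0, by omega⟩) = z) :
    ∀ w : ZMod m × Fin m, h w = z := by
  have key : ∀ j : ℕ, ∀ hj : j < m, ∀ i : ZMod m, h (i, ⟨j, hj⟩) = z := by
    intro j
    induction j with
    | zero => intro hj i; exact hz i
    | succ k ih =>
      intro hj i
      have hk : k < m := by omega
      have h1 : E z (h (i, ⟨k+1, hj⟩)) := by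
        have := hhom (i, ⟨k, hk⟩) (i, ⟨k+1, hj⟩) (Or.inr (Or.inr (Or.inl ⟨rfl, rfl⟩)))
        rwa [ih hk i] at this
      have h2 : E (h (i, ⟨k+1, hj⟩)) z := by
        have := hhom (i, ⟨k+1, hj⟩) (i+1, ⟨k, hk⟩) (Or.inr (Or.inr (Or.inr ⟨rfl, rfl⟩)))
        rwa [ih hk (i+1)] at this
      by_contra hne
      rcases htour _ z hne with ⟨_, hb⟩ | ⟨_, hb⟩
      · exact hb h1
      · exact hb h2
  intro w
  exact key w.2.1 w.2.2 w.1
end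

section
/- Let m ≥ 3. (a) For every homomorphism r from Cyl*_m to itself such that r (i, 0) = (i, 0) for every i : ZMod m and the image of r is contained in the bottom copy, there exists c : ZMod m such that r (i, m − 1) = (i + c, 0) for every i : ZMod m. (b) Conversely, for every c : ZMod m there exists such a homomorphism r (a retraction of Cyl*_m onto its bottom copy) with r (i, m − 1) = (i + c, 0) for every i : ZMod m. Hence the maps induced on the top copy by retractions of Cyl*_m onto its bottom copy are precisely the rotations i ↦ i + c of the bottom cycle. -/
/-- the maps induced on the top copy by retractions of `Cyl*_m` onto its bottom
copy are precisely the rotations of the bottom cycle. -/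
theorem stmt8 (m : ℕ) (hm : 3 ≤ m) :
    (∀ r : ZMod m × Fin m → ZMod m × Fin m,
      (∀ a b, CylE m a b → CylE m (r a) (r b)) →
      (∀ i : ZMod m, r (i, ⟨0, by omega⟩) = (i, ⟨0, by omega⟩)) →
      (∀ w : ZMod m × Fin m, ∃ i : ZMod m, r w = (i, ⟨0, by omega⟩)) →
      ∃ c : ZMod m, ∀ i : ZMod m, r (i, ⟨m - 1, by omega⟩) = (i + c, ⟨0, by omega⟩)) ∧
    (∀ c : ZMod m, ∃ r : ZMod m × Fin m → ZMod m × Fin m,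
      (∀ a b, CylE m a b → CylE m (r a) (r b)) ∧
      (∀ i : ZMod m, r (i, ⟨0, by omega⟩) = (i, ⟨0, by omega⟩)) ∧
      (∀ w : ZMod m × Fin m, ∃ i : ZMod m, r w = (i, ⟨0, by omega⟩)) ∧
      (∀ i : ZMod m, r (i, ⟨m - 1, by omega⟩) = (i + c, ⟨0, by omega⟩))) := by
  haveI : NeZero m := ⟨by omega⟩
  have hm0 : 0 < m := by omega
  have h1 : (1 : ZMod m) ≠ 0 := by
    intro h
    have h' : ((1 : ℕ) : ZMod m) = 0 := by exact_mod_cast h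
    have := (ZMod.natCast_eq_zero_iff 1 m).mp h'
    have := Nat.le_of_dvd one_pos this
    omega
  have h2 : (2 : ZMod m) ≠ 0 := by
    intro h
    have h' : ((2 : ℕ) : ZMod m) = 0 := by exact_mod_cast h
    have := (ZMod.natCast_eq_zero_iff 2 m).mp h'
    have := Nat.le_of_dvd two_pos this
    omega
  have hbot : ∀ (a₁ b₁ : ZMod m),
      CylE m (a₁, (⟨0, hm0⟩ : Fin m)) (b₁, (⟨0, hm0⟩ : Fin m)) → b₁ = a₁ ∨ b₁ = a₁ + 1 := by
    intro a₁ b₁ h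
    rcases h with h | ⟨h, _⟩ | ⟨_, h⟩ | ⟨_, h⟩
    · left; exact (Prod.ext_iff.mp h).1.symm
    · right; exact h
    · simp at h
    · simp at h
  constructor
  · intro r hhom hbotfix himg
    have key : ∀ j, ∀ hj : j < m, ∃ c : ZMod m, ∀ i : ZMod m,
        r (i, ⟨j, hj⟩) = (i + c, ⟨0, hm0⟩) := by
      intro j
      induction j with
      | zero =>
        intro hj
        exact ⟨0, fun i => by simpa using hbotfix i⟩
      | succ j ih =>
        intro hj
        obtain ⟨c, hc⟩ := ih (by omega)
        have hjm : j < m := by omega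
        have he : ∀ i : ZMod m, ∃ x, r (i, ⟨j + 1, hj⟩) = (x, ⟨0, hm0⟩) :=
          fun i => himg (i, ⟨j + 1, hj⟩)
        choose e he using he
        have hred : ∀ i : ZMod m, e i = i + c ∨ e i = i + c + 1 := by
          intro i
          have hedge : CylE m (i, (⟨j, hjm⟩ : Fin m)) (i, ⟨j + 1, hj⟩) :=
            Or.inr (Or.inr (Or.inl ⟨rfl, rfl⟩))
          have := hhom _ _ hedge
          rw [hc i, he i] at this
          exact hbot _ _ this
        have hcyc : ∀ i : ZMod m, e (i + 1) = e i ∨ e (i + 1) = e i + 1 := by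
          intro i
          have hedge : CylE m (i, (⟨j + 1, hj⟩ : Fin m)) (i + 1, ⟨j + 1, hj⟩) :=
            Or.inr (Or.inl ⟨rfl, rfl⟩)
          have := hhom _ _ hedge
          rw [he i, he (i + 1)] at this
          exact hbot _ _ this
        by_cases hall : ∀ i : ZMod m, e i = i + c + 1
        · refine ⟨c + 1, fun i => ?_⟩
          rw [he i, hall i, add_assoc]
        · push_neg at hall
          obtain ⟨i₀, hi₀⟩ := hall
          have hi₀' : e i₀ = i₀ + c := (hred i₀).resolve_right hi₀
          have step : ∀ i : ZMod m, e i = i + c → e (i + 1) = (i + 1) + c := by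
            intro i hi
            rcases hred (i + 1) with h | h
            · exact h
            · exfalso
              rcases hcyc i with h' | h'
              · rw [h, hi] at h'
                have : (2 : ZMod m) = 0 := by linear_combination h'
                exact h2 this
              · rw [h, hi] at h'
                have : (1 : ZMod m) = 0 := by linear_combination h'
                exact h1 this
          have hn : ∀ n : ℕ, e (i₀ + n) = (i₀ + n) + c := by
            intro n
            induction n with
            | zero => simpa using hi₀'
            | succ n ihn =>
              have := step (i₀ + n) ihn
              push_cast
              push_cast at this
              convert this using 2 <;> ring
          refine ⟨c, fun i => ?_⟩
          have hrep : i₀ + ((i - i₀).val : ZMod m) = i := by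
            rw [ZMod.natCast_val, ZMod.cast_id]
            ring
          have := hn (i - i₀).val
          rw [hrep] at this
          rw [he i, this]
    obtain ⟨c, hc⟩ := key (m - 1) (by omega)
    exact ⟨c, fun i => hc i⟩
  · intro c
    set k := c.val with hk
    refine ⟨fun w => (w.1 + ((min (w.2 : ℕ) k : ℕ) : ZMod m), ⟨0, hm0⟩), ?_, ?_, ?_, ?_⟩
    · intro a b h
      rcases h with h | ⟨h, h'⟩ | ⟨h, h'⟩ | ⟨h, h'⟩
      · left; rw [h]
      · right; left
        constructor
        · simp only [h, h']
          ring
        · rfl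
      · have : min (b.2 : ℕ) k = min (a.2 : ℕ) k ∨
            min (b.2 : ℕ) k = min (a.2 : ℕ) k + 1 := by omega
        rcases this with h'' | h''
        · left
          simp only [h, h'']
        · right; left
          constructor
          · simp only [h, h'']
            push_cast
            ring
          · rfl
      · have : min (a.2 : ℕ) k = min (b.2 : ℕ) k ∨
            min (a.2 : ℕ) k = min (b.2 : ℕ) k + 1 := by omega
        rcases this with h'' | h''
        · right; left
          constructor
          · simp only [h, h'']
            ring
          · rfl
        · left
          simp only [h, h'']
          push_cast
          ring_nf
    · intro i
      simp
    · intro w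
      exact ⟨w.1 + ((min (w.2 : ℕ) k : ℕ) : ZMod m), rfl⟩
    · intro i
      have hkm : k ≤ m - 1 := by
        have := ZMod.val_lt c
        omega
      simp only [Fin.val_mk]
      rw [min_eq_right hkm, ZMod.natCast_val, ZMod.cast_id]
end

section
/- Let (V, E) be a finite reflexive tournament and let H₀ ⊆ V be a subset such that every endomorphism of (V, E) that is the identity on H₀ is an automorphism of (V, E). Then every endomorphism h of (V, E) that is injective on H₀ (so that h maps the subtournament induced on H₀ isomorphically onto the induced subtournament on h '' H₀, an isomorphic copy of itself) is an automorphism of (V, E). -/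
/-- If every endomorphism of a finite reflexive tournament fixing `H₀` pointwise
is an automorphism, then every endomorphism that is injective on `H₀` (hence maps the induced
subtournament on `H₀` isomorphically onto a copy of itself) is an automorphism. -/
theorem stmt11 {V : Type*} [Fintype V] (E : V → V → Prop)
    (hrefl : ∀ v, E v v)
    (htour : ∀ u v : V, u ≠ v → Xor' (E u v) (E v u))
    (H₀ : Set V)
    (hfix : ∀ e : V → V, IsEndo E e → (∀ v ∈ H₀, e v = v) → IsAuto E e)
    (h : V → V) (hh : IsEndo E h) (hinj : Set.InjOn h H₀) :
    IsAuto E h := by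
  classical
  -- First: it suffices to show `h` is injective.
  have key : Function.Injective h := by
    by_contra hni
    rw [Function.not_injective_iff] at hni
    obtain ⟨u, v, huv, hne⟩ := hni
    -- the fiber of `h u`; pick `w` in the fiber, belonging to `H₀` if possible
    by_cases hex : ∃ x, x ∈ H₀ ∧ h x = h u
    case pos =>
      obtain ⟨w, hwH, hwf⟩ := hex
      -- collapse the fiber to `w`
      set g : V → V := fun z => if h z = h u then w else z with hg
      have hgendo : IsEndo E g := by
        intro a b hab
        by_cases ha : h a = h u <;> by_cases hb : h b = h u <;>
            simp only [hg, ha, hb, if_pos, if_neg, if_true, if_false]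
        · exact hrefl w
        · -- need E w b
          by_contra hwb
          have hbw : b ≠ w := fun hbw => hb (hbw ▸ hwf)
          have h1 : E b w := ((htour w b (fun e => hbw e.symm)).resolve_left
            (fun ⟨e1, _⟩ => hwb e1)).1
          have h2 : E (h b) (h w) := hh b w h1
          have h3 : E (h a) (h b) := hh a b hab
          rw [ha] at h3; rw [hwf] at h2
          exact ((htour (h u) (h b) (fun e => hb e.symm)).elim
            (fun ⟨_, e2⟩ => e2 h2) (fun ⟨_, e2⟩ => e2 h3))
        · -- need E a w
          by_contra haw
          have haw' : w ≠ a := fun e => ha (e ▸ hwf)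
          have h1 : E w a := ((htour a w (fun e => haw' e.symm)).resolve_left
            (fun ⟨e1, _⟩ => haw e1)).1
          have h2 : E (h w) (h a) := hh w a h1
          have h3 : E (h a) (h b) := hh a b hab
          rw [hb] at h3; rw [hwf] at h2
          exact ((htour (h u) (h a) (fun e => ha e.symm)).elim
            (fun ⟨_, e2⟩ => e2 h3) (fun ⟨_, e2⟩ => e2 h2))
        · exact hab
      have hgfix : ∀ z ∈ H₀, g z = z := by
        intro z hz
        by_cases hzf : h z = h u
        · simp only [hg, if_pos hzf]
          exact hinj hwH hz (hwf.trans hzf.symm)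
        · simp only [hg, if_neg hzf]
      obtain ⟨_, g', hg', _, _⟩ := hfix g hgendo hgfix
      have ginj : Function.Injective g := hg'.injective
      have : g u = g v := by
        simp only [hg, if_pos rfl, if_pos huv.symm]
      exact hne (ginj this)
    case neg =>
      -- collapse the fiber to `u`; no point of `H₀` lies in the fiber
      set g : V → V := fun z => if h z = h u then u else z with hg
      have hgendo : IsEndo E g := by
        intro a b hab
        by_cases ha : h a = h u <;> by_cases hb : h b = h u <;>
            simp only [hg, ha, hb, if_pos, if_neg, if_true, if_false]
        · exact hrefl u
        · by_contra hwb
          have hbw : b ≠ u := fun hbw => hb (hbw ▸ rfl)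
          have h1 : E b u := ((htour u b (fun e => hbw e.symm)).resolve_left
            (fun ⟨e1, _⟩ => hwb e1)).1
          have h2 : E (h b) (h u) := hh b u h1
          have h3 : E (h a) (h b) := hh a b hab
          rw [ha] at h3
          exact ((htour (h u) (h b) (fun e => hb e.symm)).elim
            (fun ⟨_, e2⟩ => e2 h2) (fun ⟨_, e2⟩ => e2 h3))
        · by_contra haw
          have haw' : u ≠ a := fun e => ha (e ▸ rfl)
          have h1 : E u a := ((htour a u (fun e => haw' e.symm)).resolve_left
            (fun ⟨e1, _⟩ => haw e1)).1
          have h2 : E (h u) (h a) := hh u a h1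
          have h3 : E (h a) (h b) := hh a b hab
          rw [hb] at h3
          exact ((htour (h u) (h a) (fun e => ha e.symm)).elim
            (fun ⟨_, e2⟩ => e2 h3) (fun ⟨_, e2⟩ => e2 h2))
        · exact hab
      have hgfix : ∀ z ∈ H₀, g z = z := by
        intro z hz
        by_cases hzf : h z = h u
        · exact absurd ⟨z, hz, hzf⟩ hex
        · simp only [hg, if_neg hzf]
      obtain ⟨_, g', hg', _, _⟩ := hfix g hgendo hgfix
      have ginj : Function.Injective g := hg'.injective
      have : g u = g v := by
        simp only [hg, if_pos rfl, if_pos huv.symm]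
      exact hne (ginj this)
  -- Now `h` is injective, hence bijective, and its inverse is a homomorphism.
  have hbij : Function.Bijective h := Finite.injective_iff_bijective.mp key
  let e : V ≃ V := Equiv.ofBijective h hbij
  refine ⟨hh, e.symm, ?_, ?_, ?_⟩
  · intro x; exact e.symm_apply_apply x
  · intro x; exact e.apply_symm_apply x
  · intro a b hab
    by_cases heq : e.symm a = e.symm b
    · rw [heq]; exact hrefl _
    · rcases htour (e.symm a) (e.symm b) heq with ⟨h1, _⟩ | ⟨h2, _⟩
      · exact h1
      · exfalso
        have h3 : E (h (e.symm b)) (h (e.symm a)) := hh _ _ h2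
        have hb : h (e.symm b) = b := e.apply_symm_apply b
        have ha : h (e.symm a) = a := e.apply_symm_apply a
        rw [hb, ha] at h3
        have hab' : a ≠ b := fun e' => heq (e' ▸ rfl)
        exact ((htour a b hab').elim (fun ⟨_, e2⟩ => e2 h3) (fun ⟨_, e2⟩ => e2 hab))
end

section
/- Let (V, E) be a finite reflexive tournament and let V₀ ⊆ V₁ ⊆ V be subsets such that the induced subtournament on V₀, the induced subtournament on V₁, and (V, E) itself are all strongly connected. Suppose that every endomorphism of the induced subtournament on V₁ that is the identity on V₀ is an automorphism of that subtournament. Then every endomorphism h of (V, E) that is injective on V₀ (so maps the induced subtournament on V₀ to an isomorphic copy of itself) is also injective on V₁ (so maps the induced subtournament on V₁ to an isomorphic copy of itself). -/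
/-- Let `V₀ ⊆ V₁ ⊆ V` with the induced subtournaments on `V₀` and `V₁`, as well
as `(V, E)` itself, strongly connected. If every endomorphism of the induced subtournament on
`V₁` fixing `V₀` pointwise is an automorphism of that subtournament, then every endomorphism
of `(V, E)` that is injective on `V₀` is also injective on `V₁`. -/
theorem stmt12 {V : Type*} [Fintype V] (E : V → V → Prop)
    (hrefl : ∀ v, E v v)
    (htour : ∀ u v : V, u ≠ v → Xor' (E u v) (E v u))
    (V₀ V₁ : Set V) (h01 : V₀ ⊆ V₁)
    (hSC0 : ∀ u v : V₀, Relation.ReflTransGen (fun a b : V₀ => E a.1 b.1) u v)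
    (hSC1 : ∀ u v : V₁, Relation.ReflTransGen (fun a b : V₁ => E a.1 b.1) u v)
    (hSC : ∀ u v : V, Relation.ReflTransGen E u v)
    (hfix : ∀ e : V₁ → V₁,
      (∀ u v : V₁, E u.1 v.1 → E (e u).1 (e v).1) →
      (∀ v : V₁, v.1 ∈ V₀ → e v = v) →
      (∀ u v : V₁, E u.1 v.1 → E (e u).1 (e v).1) ∧
        ∃ g : V₁ → V₁, Function.LeftInverse g e ∧ Function.RightInverse g e ∧
          (∀ u v : V₁, E u.1 v.1 → E (g u).1 (g v).1))
    (h : V → V) (hh : ∀ u v, E u v → E (h u) (h v))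
    (hinj0 : Set.InjOn h V₀) :
    Set.InjOn h V₁ := by
  classical
  intro a ha b hb hab
  by_contra hne
  -- Choose a canonical representative `c` of the kernel class of `a`, lying in `V₀` if possible.
  obtain ⟨c, hc1, hc0fix⟩ :
      ∃ c : V₁, h c.1 = h a ∧ ∀ v : V₁, v.1 ∈ V₀ → h v.1 = h a → v = c := by
    by_cases hex : ∃ v : V₁, v.1 ∈ V₀ ∧ h v.1 = h a
    · obtain ⟨v, hv0, hveq⟩ := hex
      exact ⟨v, hveq, fun w hw0 hweq =>
        Subtype.ext (hinj0 hw0 hv0 (by rw [hweq, hveq]))⟩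
    · exact ⟨⟨a, ha⟩, rfl, fun w hw0 hweq => absurd ⟨w, hw0, hweq⟩ hex⟩
  -- The collapsing map.
  set e : V₁ → V₁ := fun x => if h x.1 = h a then c else x with he
  -- `e` is an endomorphism of the induced subtournament on `V₁`.
  have hendo : ∀ u v : V₁, E u.1 v.1 → E (e u).1 (e v).1 := by
    intro u v huv
    by_cases hu : h u.1 = h a <;> by_cases hv : h v.1 = h a
    · simp only [he, if_pos hu, if_pos hv]
      exact hrefl c.1
    · simp only [he, if_pos hu, if_neg hv]
      -- need `E c.1 v.1`
      have hcv : c.1 ≠ v.1 := fun hcontra => hv (hcontra ▸ hc1)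
      have himg : E (h c.1) (h v.1) := by
        have := hh u.1 v.1 huv
        rwa [hu, ← hc1] at this
      have hhne : h c.1 ≠ h v.1 := fun hcontra => hv (by rw [← hcontra, hc1])
      have hnvc : ¬ E v.1 c.1 := fun hvc =>
        (htour (h c.1) (h v.1) hhne).elim (fun p => p.2 (hh _ _ hvc)) (fun p => p.2 himg)
      exact (htour c.1 v.1 hcv).elim (fun p => p.1) (fun p => absurd p.1 hnvc)
    · simp only [he, if_neg hu, if_pos hv]
      -- need `E u.1 c.1`
      have huc : u.1 ≠ c.1 := fun hcontra => hu (hcontra ▸ hc1)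
      have himg : E (h u.1) (h c.1) := by
        have := hh u.1 v.1 huv
        rwa [hv, ← hc1] at this
      have hhne : h u.1 ≠ h c.1 := fun hcontra => hu (by rw [hcontra, hc1])
      have hncu : ¬ E c.1 u.1 := fun hcu =>
        (htour (h u.1) (h c.1) hhne).elim (fun p => p.2 (hh _ _ hcu)) (fun p => p.2 himg)
      exact (htour u.1 c.1 huc).elim (fun p => p.1) (fun p => absurd p.1 hncu)
    · simp only [he, if_neg hu, if_neg hv]
      exact huv
  -- `e` fixes `V₀` pointwise.
  have hfixes : ∀ v : V₁, v.1 ∈ V₀ → e v = v := by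
    intro v hv0
    by_cases hveq : h v.1 = h a
    · simp only [he, if_pos hveq]
      exact (hc0fix v hv0 hveq).symm
    · simp only [he, if_neg hveq]
  obtain ⟨-, g, hg, -, -⟩ := hfix e hendo hfixes
  have hea : e ⟨a, ha⟩ = c := by simp only [he, if_pos rfl]
  have heb : e ⟨b, hb⟩ = c := by simp only [he, if_pos hab.symm]
  have hkey : (⟨a, ha⟩ : V₁) = ⟨b, hb⟩ := by
    have h1 := hg ⟨a, ha⟩
    have h2 := hg ⟨b, hb⟩
    rw [hea] at h1
    rw [heb] at h2
    rw [← h1, ← h2]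
  exact hne (congrArg Subtype.val hkey)
end
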